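/- arXiv:1201.4941 — 7 statements merged into one kernel-verified Lean document; each statement's English description precedes it below -/
import Mathlib

section
/- The q-Eulerian polynomials A_n(t,q) defined by ∑_{n≥0} A_n(t,q) z^n/(q;q)_n = (e(z;q) − e(tz;q))/(e(tz;q) − t·e(z;q)) satisfy the symmetry t^n · A_n(1/t, q) = t · A_n(t,q) for all n ≥ 1, where the identity is between polynomials in t. -/
/-!
The substitution `Φ : F(t, z) ↦ F(1/t, tz)` is a ring homomorphism (into power series over
Laurent polynomials in `t`) that exchanges `e(z;q)` and `e(tz;q)` and sends `t` to `1/t`.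
Applying `Φ` to `(e(tz) − t e(z)) F = e(z) − e(tz)` and multiplying by `−t` shows that `Φ F`
and `t F` satisfy the same linear equation, whose coefficient `e(tz) − t e(z)` has constant
term `1 − t ≠ 0`. Hence `Φ F = t F`, which read coefficientwise is `t^n A_n(1/t) = t A_n(t)`.
-/

open Polynomial PowerSeries

/-- The variable `q` in the field `ℚ(q)` of rational functions. -/
noncomputable def qq : RatFunc ℚ := RatFunc.X

/-- The q-shifted factorial `(q;q)_n = ∏_{i=1}^n (1 - q^i)`. -/
noncomputable def qfac (n : ℕ) : RatFunc ℚ := ∏ i ∈ Finset.range n, (1 - qq ^ (i + 1))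

/-- The q-exponential `e(z;q) = ∑ z^n/(q;q)_n`, as a power series in `z` over `ℚ(q)[t]`. -/
noncomputable def qexpZ : PowerSeries (Polynomial (RatFunc ℚ)) :=
  PowerSeries.mk fun n => Polynomial.C (qfac n)⁻¹

/-- `e(tz;q) = ∑ t^n z^n/(q;q)_n`, as a power series in `z` over `ℚ(q)[t]`. -/
noncomputable def qexpTZ : PowerSeries (Polynomial (RatFunc ℚ)) :=
  PowerSeries.mk fun n => Polynomial.X ^ n * Polynomial.C (qfac n)⁻¹

open LaurentPolynomial

namespace Polynomial

variable {R : Type*}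

theorem reflect_add_eq_X_pow_mul_reflect [Semiring R] {p : R[X]} {m : ℕ} (hp : p.natDegree ≤ m)
    (k : ℕ) : p.reflect (m + k) = X ^ k * p.reflect m := by
  simpa [reflect_one, X_pow_mul] using reflect_mul p 1 hp (natDegree_one.trans_le k.zero_le)

/-- Comparing degrees in `t^n · t^d p(1/t) = t^(d+1) p(t)`, `d = natDegree p`, forces `d < n`,
and then `t^n p(1/t)` is the reflection of `p` at `n`. -/
theorem reflect_eq_X_mul_of_T_mul_invert [CommRing R] {p : R[X]} {n : ℕ}
    (h : T n * invert (toLaurent p) = T 1 * toLaurent p) : p.reflect n = X * p := by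
  nontriviality R
  rcases eq_or_ne p 0 with rfl | hp
  · simp
  set d := p.natDegree
  have hrev : X ^ n * p.reverse = X ^ (d + 1) * p := by
    apply toLaurent_injective
    simp only [map_mul, toLaurent_X_pow, toLaurent_reverse]
    push_cast
    rw [T_add]
    linear_combination T (d : ℤ) * h
  have hdeg : d ≤ n := by
    have hdeg_eq := congrArg natDegree hrev
    rw [natDegree_X_pow_mul _ (reverse_eq_zero.not.2 hp), natDegree_X_pow_mul _ hp] at hdeg_eq
    linarith [reverse_natDegree_le p]
  obtain ⟨k, rfl⟩ := Nat.exists_eq_add_of_le hdeg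
  refine (isRegular_X_pow (R := R) d).left ?_
  dsimp only
  rw [reflect_add_eq_X_pow_mul_reflect le_rfl, ← mul_assoc, ← pow_add, ← mul_assoc,
    ← pow_succ]
  exact hrev

end Polynomial

namespace PowerSeries

variable {R : Type*} [CommRing R]

/-- `F(t, z) ↦ F(1/t, tz)`. -/
noncomputable def invertRescale : PowerSeries R[X] →+* PowerSeries R[T;T⁻¹] :=
  (rescale (T 1)).comp (map ((invert : R[T;T⁻¹] ≃ₐ[R] R[T;T⁻¹]).toRingHom.comp toLaurent))

theorem coeff_invertRescale (F : PowerSeries R[X]) (n : ℕ) :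
    coeff n (invertRescale F) = T n * invert (toLaurent (coeff n F)) := by
  simp [invertRescale, coeff_rescale, T_pow]

theorem invertRescale_C (p : R[X]) :
    invertRescale (PowerSeries.C p) = PowerSeries.C (invert (toLaurent p)) := by
  ext (_ | n) <;> simp [coeff_invertRescale, coeff_C]

variable (f : PowerSeries R)

theorem invertRescale_map_C :
    invertRescale (map Polynomial.C f)
      = map toLaurent (rescale Polynomial.X (map Polynomial.C f)) := by
  ext n
  simp [coeff_invertRescale, coeff_rescale]

theorem invertRescale_rescale_X_map_C :
    invertRescale (rescale Polynomial.X (map Polynomial.C f))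
      = map toLaurent (map Polynomial.C f) := by
  ext n
  simp [coeff_invertRescale, coeff_rescale]

variable {f}

theorem rescale_X_map_C_sub_C_X_mul_ne_zero (hf : constantCoeff f ≠ 0) :
    rescale Polynomial.X (map Polynomial.C f) - PowerSeries.C Polynomial.X * map Polynomial.C f
      ≠ 0 := by
  intro h
  have hcoeff := congrArg (fun g => (coeff 0 g).coeff 1) h
  simp only [map_sub, coeff_rescale, coeff_C_mul, coeff_map, pow_zero, one_mul, map_zero,
    Polynomial.coeff_zero] at hcoeff
  exact hf (by simpa using hcoeff)

theorem invertRescale_eq_C_T_mul [IsDomain R] (hf : constantCoeff f ≠ 0) {F : PowerSeries R[X]}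
    (hF : (rescale Polynomial.X (map Polynomial.C f)
        - PowerSeries.C Polynomial.X * map Polynomial.C f) * F
      = map Polynomial.C f - rescale Polynomial.X (map Polynomial.C f)) :
    invertRescale F = PowerSeries.C (T 1) * map toLaurent F := by
  set E := map toLaurent (map Polynomial.C f)
  set Et := map toLaurent (rescale Polynomial.X (map Polynomial.C f))
  have hι : (Et - PowerSeries.C (T 1) * E) * map toLaurent F = E - Et := by
    simpa using congrArg (map toLaurent) hF
  have hΦ : (E - PowerSeries.C (T (-1)) * Et) * invertRescale F = Et - E := by
    simpa [invertRescale_C, invertRescale_map_C, invertRescale_rescale_X_map_C]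
      using congrArg invertRescale hF
  have hinv : PowerSeries.C (T 1) * PowerSeries.C (T (-1)) = (1 : PowerSeries R[T;T⁻¹]) := by
    rw [← map_mul, ← T_add]; simp
  have hD : Et - PowerSeries.C (T 1) * E ≠ 0 := by
    have hD_map : Et - PowerSeries.C (T 1) * E = map toLaurent
        (rescale Polynomial.X (map Polynomial.C f)
          - PowerSeries.C Polynomial.X * map Polynomial.C f) := by
      simp [E, Et]
    rw [hD_map, map_ne_zero_iff _ (map_injective _ toLaurent_injective)]
    exact rescale_X_map_C_sub_C_X_mul_ne_zero hf
  apply mul_left_cancel₀ hD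
  linear_combination
    (-PowerSeries.C (T 1)) * hΦ - PowerSeries.C (T 1) * hι - (Et * invertRescale F) * hinv

theorem reflect_coeff_eq_X_mul_coeff [IsDomain R] (hf : constantCoeff f ≠ 0)
    {F : PowerSeries R[X]}
    (hF : (rescale Polynomial.X (map Polynomial.C f)
        - PowerSeries.C Polynomial.X * map Polynomial.C f) * F
      = map Polynomial.C f - rescale Polynomial.X (map Polynomial.C f)) (n : ℕ) :
    (coeff n F).reflect n = Polynomial.X * coeff n F := by
  apply reflect_eq_X_mul_of_T_mul_invert
  simpa [coeff_invertRescale] using congrArg (coeff n) (invertRescale_eq_C_T_mul hf hF)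

end PowerSeries

theorem qfac_ne_zero (n : ℕ) : qfac n ≠ 0 := by
  refine Finset.prod_ne_zero_iff.2 fun i _ => ?_
  have h : (1 : RatFunc ℚ) - qq ^ (i + 1)
      = algebraMap ℚ[X] (RatFunc ℚ) (1 - Polynomial.X ^ (i + 1)) := by
    simp [qq]
  rw [h]
  refine RatFunc.algebraMap_ne_zero fun h0 => ?_
  simpa using congrArg (eval 0) h0

noncomputable def qexp : PowerSeries (RatFunc ℚ) := PowerSeries.mk fun n => (qfac n)⁻¹

theorem qexpZ_eq_map_C : qexpZ = map Polynomial.C qexp := by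
  ext
  simp [qexpZ, qexp]

theorem qexpTZ_eq_rescale_X : qexpTZ = rescale Polynomial.X (map Polynomial.C qexp) := by
  ext
  simp [qexpTZ, qexp, coeff_rescale]

/-- If `A n = A_n(t,q)` are the q-Eulerian polynomials, defined by
`∑_{n≥0} A_n(t,q) z^n/(q;q)_n = (e(z;q) − e(tz;q))/(e(tz;q) − t e(z;q))`
(stated in cross-multiplied form), then `t^n A_n(1/t,q) = t · A_n(t,q)` for `n ≥ 1`;
here `t^n A_n(1/t,q)` is the reflection (reversal) of `A_n` at degree `n`. -/
theorem qEulerian_symmetry (A : ℕ → Polynomial (RatFunc ℚ))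
    (hA : (qexpTZ - PowerSeries.C (Polynomial.X : Polynomial (RatFunc ℚ)) * qexpZ) *
        PowerSeries.mk (fun n => A n * Polynomial.C (qfac n)⁻¹) = qexpZ - qexpTZ) :
    ∀ n : ℕ, 1 ≤ n → (A n).reflect n = Polynomial.X * A n := by
  intro n _
  rw [qexpZ_eq_map_C, qexpTZ_eq_rescale_X] at hA
  have h := reflect_coeff_eq_X_mul_coeff (by simp [qexp, qfac]) hA n
  rw [coeff_mk, mul_comm, reflect_C_mul, mul_left_comm] at h
  exact mul_left_cancel₀ (by simpa using qfac_ne_zero n) h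
end

section
/- Write A_n(t,q) = ∑_k A_{n,k}(q) t^k for the q-Eulerian polynomials. Then A_{n,k}(q) = A_{n,n-k-1}(q) for all n ≥ 1 and 0 ≤ k ≤ n−1. -/
open Polynomial PowerSeries

/-!
For any power series `e(z)` with `e(0) ≠ 0`, let `F(t,z) = (e(z) - e(tz)) / (e(tz) - t e(z))`.
The substitution `t ↦ t⁻¹, z ↦ t z` swaps `e(z)` and `e(tz)` and turns the denominator into
`-t⁻¹ (e(tz) - t e(z))`, so `F(t⁻¹, t z) = t F(t, z)`. Comparing coefficients of `z^n` gives
`t^n A_n(t⁻¹) = t A_n(t)`, i.e. `A_n` is palindromic of degree `n - 1`. The substitution is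
carried out in power series over Laurent polynomials `R[T;T⁻¹]`.
-/

open LaurentPolynomial

theorem Polynomial.coeff_toLaurent_natCast {R : Type*} [Semiring R] (p : R[X]) (k : ℕ) :
    (toLaurent p).coeff k = p.coeff k :=
  Finsupp.mapDomain_apply Nat.castEmbedding.injective p.toFinsupp.coeff k

theorem LaurentPolynomial.coeff_T_mul {R : Type*} [Semiring R] (f : R[T;T⁻¹]) (m n : ℤ) :
    (T m * f).coeff n = f.coeff (n - m) := by
  rw [T, AddMonoidAlgebra.coeff_single_mul_apply, one_mul, neg_add_eq_sub]

theorem Polynomial.coeff_sub_eq_of_toLaurent_eq_T_mul_invert {R : Type*} [CommSemiring R]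
    {p : R[X]} {m : ℕ} (h : toLaurent p = T m * invert (toLaurent p)) {k : ℕ} (hk : k ≤ m) :
    p.coeff k = p.coeff (m - k) := by
  have hk' := congrArg (fun f : R[T;T⁻¹] => f.coeff k) h
  rwa [coeff_T_mul, invert_apply, coeff_toLaurent_natCast, neg_sub, ← Nat.cast_sub hk,
    coeff_toLaurent_natCast] at hk'

namespace PowerSeries

section InvertDilate

variable {R : Type*} [CommRing R]

/-- The substitution `t ↦ t⁻¹, z ↦ t z` in power series in `z` over `R[t]`. -/
noncomputable def invertDilate : R[X]⟦X⟧ →+* R[T;T⁻¹]⟦X⟧ :=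
  (rescale (T 1)).comp (map ((invert : R[T;T⁻¹] ≃ₐ[R] R[T;T⁻¹]).toRingHom.comp toLaurent))

theorem coeff_invertDilate (F : R[X]⟦X⟧) (n : ℕ) :
    coeff n (invertDilate F) = T n * invert (toLaurent (coeff n F)) := by
  simp [invertDilate, coeff_rescale, T_pow]

theorem invertDilate_C_X :
    invertDilate (C (Polynomial.X : R[X])) = C (T (-1)) := by
  ext (_ | n) <;> simp [invertDilate, coeff_rescale, coeff_C]

theorem invertDilate_map_C (e : R⟦X⟧) :
    invertDilate (e.map Polynomial.C) = rescale (T 1) (e.map LaurentPolynomial.C) := by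
  ext n
  simp [invertDilate, coeff_rescale]

theorem invertDilate_rescale_X_map_C (e : R⟦X⟧) :
    invertDilate (rescale Polynomial.X (e.map Polynomial.C)) = e.map LaurentPolynomial.C := by
  ext n
  simp [invertDilate, coeff_rescale, T_pow, ← mul_assoc]

theorem map_toLaurent_map_C (e : R⟦X⟧) :
    (e.map Polynomial.C).map toLaurent = e.map LaurentPolynomial.C := by
  ext n
  simp

theorem map_toLaurent_rescale_X (F : R[X]⟦X⟧) :
    (rescale Polynomial.X F).map toLaurent = rescale (T 1) (F.map toLaurent) := by
  rw [← rescale_map, toLaurent_X]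

end InvertDilate

variable {R : Type*} [CommRing R] [IsDomain R]

theorem toLaurent_coeff_eq_T_mul_invert_of_mul_eq (e : R⟦X⟧) (he : constantCoeff e ≠ 0)
    {F : R[X]⟦X⟧}
    (hF : (rescale Polynomial.X (e.map Polynomial.C) - C Polynomial.X * e.map Polynomial.C) * F =
      e.map Polynomial.C - rescale Polynomial.X (e.map Polynomial.C)) (n : ℕ) :
    toLaurent (coeff n F) = T (n - 1) * invert (toLaurent (coeff n F)) := by
  set f := e.map LaurentPolynomial.C
  set g := rescale (T 1) f
  have hF_toLaurent : (g - C (T 1) * f) * F.map toLaurent = f - g := by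
    simpa [map_toLaurent_rescale_X, map_toLaurent_map_C] using congrArg (map toLaurent) hF
  have hF_invertDilate : (f - C (T (-1)) * g) * invertDilate F = g - f := by
    simpa [invertDilate_map_C, invertDilate_rescale_X_map_C, invertDilate_C_X] using
      congrArg invertDilate hF
  -- the constant coefficient is `e(0) (1 - T)`
  have hne : g - C (T 1) * f ≠ 0 := by
    intro h
    have h0 := congrArg (fun G => (coeff 0 G).coeff 1) h
    simp only [f, g, map_sub, coeff_rescale, coeff_C_mul, pow_zero, one_mul, coeff_map] at h0
    simp [← single_eq_C_mul_T, he] at h0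
  have hT : C (T 1 : R[T;T⁻¹]) * C (T (-1)) = 1 := by
    rw [← map_mul, ← T_add, add_neg_cancel, T_zero, map_one]
  have hdil : invertDilate F = C (T 1) * F.map toLaurent :=
    mul_left_cancel₀ hne <| by
      linear_combination (-C (T 1)) * hF_invertDilate - C (T 1) * hF_toLaurent -
        g * invertDilate F * hT
  have hn := congrArg (coeff n) hdil
  rw [coeff_invertDilate, coeff_C_mul, coeff_map] at hn
  calc toLaurent (coeff n F) = T (-1) * (T 1 * toLaurent (coeff n F)) := by
        rw [← mul_assoc, ← T_add, neg_add_cancel, T_zero, one_mul]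
    _ = T (n - 1) * invert (toLaurent (coeff n F)) := by
        rw [← hn, ← mul_assoc, ← T_add, neg_add_eq_sub]

end PowerSeries

/-- With `A n = A_n(t,q)` the q-Eulerian polynomials (defined by the generating
function, in cross-multiplied form) and `A_{n,k}(q)` the coefficient of `t^k`,
we have `A_{n,k}(q) = A_{n,n-k-1}(q)` for `n ≥ 1` and `0 ≤ k ≤ n-1`. -/
theorem qEulerian_coeff_symmetry (A : ℕ → Polynomial (RatFunc ℚ))
    (hA : (qexpTZ - PowerSeries.C (Polynomial.X : Polynomial (RatFunc ℚ)) * qexpZ) *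
        PowerSeries.mk (fun n => A n * Polynomial.C (qfac n)⁻¹) = qexpZ - qexpTZ) :
    ∀ n k : ℕ, 1 ≤ n → k ≤ n - 1 → (A n).coeff k = (A n).coeff (n - k - 1) := by
  intro n k hn hk
  set e : (RatFunc ℚ)⟦X⟧ := PowerSeries.mk fun n => (qfac n)⁻¹
  have hZ : qexpZ = e.map Polynomial.C := by ext; simp [qexpZ, e]
  have hTZ : qexpTZ = rescale Polynomial.X (e.map Polynomial.C) := by
    ext; simp [qexpTZ, e, coeff_rescale]
  have he : constantCoeff e ≠ 0 := by simp [e, qfac]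
  rw [hZ, hTZ] at hA
  have hpal := toLaurent_coeff_eq_T_mul_invert_of_mul_eq e he hA n
  simp only [PowerSeries.coeff_mk, map_mul, toLaurent_C, invert_C] at hpal
  have hC : (LaurentPolynomial.C (qfac n)⁻¹ : (RatFunc ℚ)[T;T⁻¹]) ≠ 0 :=
    _root_.map_ne_zero _ |>.mpr (inv_ne_zero (qfac_ne_zero n))
  have hA_pal : toLaurent (A n) = T ((n - 1 : ℕ) : ℤ) * invert (toLaurent (A n)) := by
    rw [Nat.cast_pred hn]
    exact mul_right_cancel₀ hC (hpal.trans (mul_assoc _ _ _).symm)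
  rw [coeff_sub_eq_of_toLaurent_eq_T_mul_invert hA_pal hk, Nat.sub_right_comm]
end

section
/- Every permutation π of {1,...,n} admits a unique hook factorization π = p·τ_1·τ_2⋯τ_r (as concatenation of words), where p is an increasing word (possibly empty) and each τ_i is a hook. -/
/-- An increasing word (possibly empty). -/
def IsIncr (w : List ℕ) : Prop := w.Chain' (· < ·)

/-- A hook: a word `x₁x₂⋯x_m` of distinct letters with `x₁ > x₂` and
`x₂ < x₃ < ⋯ < x_m` (in particular `m ≥ 2`). -/
def IsHook (w : List ℕ) : Prop :=
  w.Nodup ∧ ∃ x y rest, w = x :: y :: rest ∧ y < x ∧ (y :: rest).Chain' (· < ·)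

/-- The number of inversions of a word: pairs of positions `i < j` with `w_i > w_j`. -/
def invList : List ℕ → ℕ
  | [] => 0
  | x :: xs => xs.countP (fun y => decide (y < x)) + invList xs

/-!
Since all letters of a hook after the first increase, no hook is a proper suffix of
another; so the last hook of a factorization is determined by the word, and peeling it
off gives uniqueness by induction. For existence, prepend letters one at a time: a new
letter `x` in front of a factorization `p · τ₁ ⋯ τ_r` either extends the increasing
word `p`, or `x` exceeds the first letter of `p` and `x · p` is itself a hook.
-/

theorem IsIncr.nodup {w : List ℕ} (hw : IsIncr w) : w.Nodup :=
  (List.IsChain.pairwise hw).nodup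

theorem IsIncr.infix {u w : List ℕ} (hw : IsIncr w) (huw : u <:+: w) : IsIncr u :=
  List.IsChain.infix hw huw

theorem IsHook.not_isIncr {τ : List ℕ} (hτ : IsHook τ) : ¬ IsIncr τ := by
  obtain ⟨-, x, y, r, rfl, hyx, -⟩ := hτ
  intro h
  exact lt_asymm hyx (List.isChain_cons_cons.1 h).1

theorem IsHook.eq_of_suffix {τ₁ τ₂ : List ℕ} (h₁ : IsHook τ₁) (h₂ : IsHook τ₂)
    (hs : τ₁ <:+ τ₂) : τ₁ = τ₂ := by
  obtain ⟨-, x, y, r, rfl, -, hr⟩ := h₂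
  rcases List.suffix_cons_iff.1 hs with h | h
  · exact h
  · exact absurd (List.IsChain.suffix hr h) h₁.not_isIncr

theorem IsHook.append_inj {a₁ a₂ τ₁ τ₂ : List ℕ} (h₁ : IsHook τ₁) (h₂ : IsHook τ₂)
    (h : a₁ ++ τ₁ = a₂ ++ τ₂) : a₁ = a₂ ∧ τ₁ = τ₂ := by
  obtain rfl : τ₁ = τ₂ := by
    rcases List.suffix_or_suffix_of_suffix (h ▸ List.suffix_append a₁ τ₁)
        (List.suffix_append a₂ τ₂) with hs | hs
    · exact h₁.eq_of_suffix h₂ hs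
    · exact (h₂.eq_of_suffix h₁ hs).symm
  exact ⟨List.append_cancel_right h, rfl⟩

def IsHookFactorization (w p : List ℕ) (ts : List (List ℕ)) : Prop :=
  IsIncr p ∧ (∀ τ ∈ ts, IsHook τ) ∧ p ++ ts.flatten = w

namespace IsHookFactorization

variable {w p p₁ p₂ : List ℕ} {ts ts₁ ts₂ : List (List ℕ)}

theorem eq_nil_iff_isIncr (h : IsHookFactorization w p ts) : ts = [] ↔ IsIncr w := by
  obtain ⟨hp, hts, rfl⟩ := h
  constructor
  · rintro rfl
    simpa using hp
  · intro hw
    cases ts with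
    | nil => rfl
    | cons τ ts =>
      exact absurd (hw.infix ⟨p, ts.flatten, by simp⟩) (hts τ (by simp)).not_isIncr

theorem append_singleton {τ : List ℕ} (h : IsHookFactorization w p (ts ++ [τ])) :
    IsHook τ ∧ IsHookFactorization (p ++ ts.flatten) p ts ∧ p ++ ts.flatten ++ τ = w := by
  obtain ⟨hp, hts, rfl⟩ := h
  exact ⟨hts τ (by simp), ⟨hp, fun σ hσ => hts σ (by simp [hσ]), rfl⟩, by simp⟩

theorem unique (h₁ : IsHookFactorization w p₁ ts₁) (h₂ : IsHookFactorization w p₂ ts₂) :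
    p₁ = p₂ ∧ ts₁ = ts₂ := by
  induction ts₁ using List.reverseRecOn generalizing w p₁ p₂ ts₂ with
  | nil =>
    obtain rfl : ts₂ = [] := h₂.eq_nil_iff_isIncr.2 (h₁.eq_nil_iff_isIncr.1 rfl)
    exact ⟨by simpa using h₁.2.2.trans h₂.2.2.symm, rfl⟩
  | append_singleton ts₁ τ₁ ih =>
    rcases ts₂.eq_nil_or_concat' with rfl | ⟨ts₂, τ₂, rfl⟩
    · exact absurd (h₁.eq_nil_iff_isIncr.2 (h₂.eq_nil_iff_isIncr.1 rfl)) (by simp)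
    · obtain ⟨hτ₁, hf₁, hw₁⟩ := h₁.append_singleton
      obtain ⟨hτ₂, hf₂, hw₂⟩ := h₂.append_singleton
      obtain ⟨hpre, rfl⟩ := hτ₁.append_inj hτ₂ (hw₁.trans hw₂.symm)
      obtain ⟨rfl, rfl⟩ := ih hf₁ (hpre ▸ hf₂)
      exact ⟨rfl, rfl⟩

theorem exists_cons {x : ℕ} (hx : x ∉ w) (h : IsHookFactorization w p ts) :
    ∃ p' ts', IsHookFactorization (x :: w) p' ts' := by
  obtain ⟨hp, hts, rfl⟩ := h
  cases p with
  | nil => exact ⟨[x], ts, List.isChain_singleton x, hts, rfl⟩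
  | cons y p =>
    have hxp : x ∉ y :: p := fun h => hx (List.mem_append_left _ h)
    rcases lt_or_gt_of_ne (List.ne_of_not_mem_cons hxp) with hxy | hyx
    · exact ⟨x :: y :: p, ts, List.IsChain.cons_cons hxy hp, hts, rfl⟩
    · have hhook : IsHook (x :: y :: p) :=
        ⟨List.nodup_cons.2 ⟨hxp, hp.nodup⟩, x, y, p, rfl, hyx, hp⟩
      refine ⟨[], (x :: y :: p) :: ts, List.isChain_nil, ?_, by simp⟩
      simpa [hhook] using hts

theorem exists_of_nodup : ∀ {w : List ℕ}, w.Nodup → ∃ p ts, IsHookFactorization w p ts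
  | [], _ => ⟨[], [], List.isChain_nil, by simp, rfl⟩
  | _ :: _, hw =>
    have ⟨_, _, h⟩ := exists_of_nodup (List.nodup_cons.1 hw).2
    h.exists_cons (List.nodup_cons.1 hw).1

end IsHookFactorization

/-- Every permutation word of `{1,…,n}` admits a unique hook factorization
`w = p · τ₁ ⋯ τ_r` with `p` increasing (possibly empty) and each `τᵢ` a hook. -/
theorem hook_factorization_existsUnique (n : ℕ) (w : List ℕ)
    (hw : w.Perm (List.range' 1 n)) :
    ∃! pt : List ℕ × List (List ℕ),
      IsIncr pt.1 ∧ (∀ τ ∈ pt.2, IsHook τ) ∧ pt.1 ++ pt.2.flatten = w := by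
  obtain ⟨p, ts, h⟩ :=
    IsHookFactorization.exists_of_nodup (hw.nodup_iff.2 List.nodup_range')
  refine ⟨(p, ts), h, fun ⟨p', ts'⟩ h' => ?_⟩
  obtain ⟨rfl, rfl⟩ := IsHookFactorization.unique h' h
  rfl
end

section
/- For any hook τ with content (set of letters) of size m and inv(τ) = k, there is a unique hook d(τ) with the same content and inv(d(τ)) = m − k; explicitly, if the content is {x_1 < ⋯ < x_m}, then d(τ) = x_{m−k+1} x_1 ⋯ x_{m−k} x_{m−k+2} ⋯ x_m. -/
/-!
In a hook `a :: w` the tail `w` is increasing, so `inv (a :: w)` is the number of letters below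
`a`, i.e. the position `j` (counting from 0) of `a` in the sorted content `xs`. Hence every hook is
`xs` with its `j`-th letter moved to the front, with `1 ≤ j ≤ m - 1`, and conversely each such `j`
gives a hook with `j` inversions. So a hook is determined by its content and inversion number, and
`d(τ)` is the one with `j = m - k`.
-/

namespace List

variable {α : Type*}

theorem countP_lt_getElem_of_pairwise [Preorder α] [DecidableLT α] {xs : List α}
    (hs : xs.Pairwise (· < ·)) {i : ℕ} (hi : i < xs.length) :
    xs.countP (· < xs[i]) = i := by
  induction xs generalizing i with
  | nil => simp at hi
  | cons x t ih =>
    rw [pairwise_cons] at hs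
    cases i with
    | zero =>
      refine countP_eq_zero.2 fun y hy => ?_
      rcases mem_cons.1 hy with rfl | hy
      · simp
      · simpa using (hs.1 y hy).le.not_gt
    | succ i =>
      have hi' : i < t.length := Nat.lt_of_succ_lt_succ hi
      rw [getElem_cons_succ, countP_cons_of_pos (by simpa using hs.1 _ (getElem_mem hi')),
        ih hs.2 hi']

theorem insertionSort_eq_of_perm [LinearOrder α] {l₁ l₂ : List α} (h : l₁ ~ l₂) :
    l₁.insertionSort (· ≤ ·) = l₂.insertionSort (· ≤ ·) :=
  ((perm_insertionSort _ l₁).trans (h.trans (perm_insertionSort _ l₂).symm)).eq_of_pairwise'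
    (pairwise_insertionSort _ l₁) (pairwise_insertionSort _ l₂)

theorem pairwise_lt_insertionSort_of_nodup [LinearOrder α] {l : List α} (h : l.Nodup) :
    (l.insertionSort (· ≤ ·)).Pairwise (· < ·) :=
  ((pairwise_insertionSort _ l).and ((perm_insertionSort _ l).nodup_iff.2 h)).imp
    fun hab => lt_of_le_of_ne hab.1 hab.2

end List

theorem invList_eq_zero_of_pairwise {w : List ℕ} (h : w.Pairwise (· < ·)) : invList w = 0 := by
  induction w with
  | nil => rfl
  | cons a t ih =>
    rw [List.pairwise_cons] at h
    simp only [invList, ih h.2, Nat.add_zero, List.countP_eq_zero, decide_eq_true_eq, not_lt]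
    exact fun y hy => (h.1 y hy).le

theorem invList_cons_of_pairwise (a : ℕ) {w : List ℕ} (h : w.Pairwise (· < ·)) :
    invList (a :: w) = w.countP (· < a) := by
  rw [invList, invList_eq_zero_of_pairwise h, Nat.add_zero]

def moveToFront (xs : List ℕ) (j : ℕ) : List ℕ := xs.getD j 0 :: xs.eraseIdx j

section moveToFront

variable {xs : List ℕ} {j : ℕ}

theorem moveToFront_eq_getElem (h : j < xs.length) : moveToFront xs j = xs[j] :: xs.eraseIdx j := by
  rw [moveToFront, List.getD_eq_getElem _ _ h]

theorem moveToFront_perm (h : j < xs.length) : (moveToFront xs j).Perm xs := by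
  rw [moveToFront_eq_getElem h]
  exact List.getElem_cons_eraseIdx_perm h

theorem invList_moveToFront (hs : xs.Pairwise (· < ·)) (h : j < xs.length) :
    invList (moveToFront xs j) = j := by
  rw [moveToFront_eq_getElem h,
    invList_cons_of_pairwise _ (hs.sublist (List.eraseIdx_sublist _ _))]
  have hcount := (List.getElem_cons_eraseIdx_perm h).countP_eq (· < xs[j])
  rwa [List.countP_cons_of_neg (by simp), List.countP_lt_getElem_of_pairwise hs h] at hcount

theorem isHook_moveToFront (hs : xs.Pairwise (· < ·)) (h0 : 0 < j) (h : j < xs.length) :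
    IsHook (moveToFront xs j) := by
  refine ⟨(moveToFront_perm h).nodup_iff.2 (hs.imp ne_of_lt), ?_⟩
  obtain ⟨x, t, rfl⟩ := List.exists_cons_of_length_pos (h0.trans h)
  obtain ⟨i, rfl⟩ := Nat.exists_eq_add_one_of_ne_zero h0.ne'
  have hi : i < t.length := by simpa using h
  rw [moveToFront_eq_getElem h, List.getElem_cons_succ, List.eraseIdx_cons_succ]
  have hpw : (x :: t.eraseIdx i).Pairwise (· < ·) :=
    hs.sublist ((t.eraseIdx_sublist i).cons_cons x)
  exact ⟨t[i], x, t.eraseIdx i, rfl, (List.pairwise_cons.1 hs).1 _ (List.getElem_mem hi),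
    List.isChain_iff_pairwise.2 hpw⟩

end moveToFront

section IsHook

variable {σ : List ℕ}

theorem IsHook.invList_pos (h : IsHook σ) : 0 < invList σ := by
  obtain ⟨-, a, y, rest, rfl, hya, hch⟩ := h
  rw [invList_cons_of_pairwise a (List.isChain_iff_pairwise.1 hch)]
  exact List.countP_pos_iff.2 ⟨y, List.mem_cons_self, by simpa using hya⟩

theorem IsHook.invList_lt_length (h : IsHook σ) : invList σ < σ.length := by
  obtain ⟨-, a, y, rest, rfl, -, hch⟩ := h
  rw [invList_cons_of_pairwise a (List.isChain_iff_pairwise.1 hch), List.length_cons]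
  exact Nat.lt_succ_of_le List.countP_le_length

theorem IsHook.eq_moveToFront (h : IsHook σ) :
    σ = moveToFront (σ.insertionSort (· ≤ ·)) (invList σ) := by
  obtain ⟨hnd, a, y, rest, rfl, -, hch⟩ := h
  set w := y :: rest
  set xs := (a :: w).insertionSort (· ≤ ·)
  have hw : w.Pairwise (· < ·) := List.isChain_iff_pairwise.1 hch
  have hxs : xs.Pairwise (· < ·) := List.pairwise_lt_insertionSort_of_nodup hnd
  have hperm : xs.Perm (a :: w) := List.perm_insertionSort _ _
  obtain ⟨i, hi, hxi⟩ := List.getElem_of_mem (hperm.mem_iff.2 List.mem_cons_self)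
  have hinv : invList (a :: w) = i := by
    have hcount := hperm.countP_eq (· < a)
    rw [List.countP_cons_of_neg (by simp), ← hxi,
      List.countP_lt_getElem_of_pairwise hxs hi] at hcount
    rw [invList_cons_of_pairwise a hw, ← hxi]
    exact hcount.symm
  have htail : w = xs.eraseIdx i := by
    refine List.Perm.eq_of_pairwise' hw (hxs.sublist (List.eraseIdx_sublist _ _)) ?_
    have hsplit := List.getElem_cons_eraseIdx_perm hi
    rw [hxi] at hsplit
    exact (hperm.symm.trans hsplit.symm).cons_inv
  rw [hinv, moveToFront_eq_getElem hi, hxi, ← htail]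

end IsHook

/-- For a hook `τ` on `m` letters with `inv(τ) = k` and content `{x₁ < ⋯ < x_m}`,
the word `d(τ) = x_{m−k+1} x₁ ⋯ x_{m−k} x_{m−k+2} ⋯ x_m` is the unique hook with
the same content and inversion number `m − k`. -/
theorem hook_complement_existsUnique (τ : List ℕ) (hτ : IsHook τ) :
    let m := τ.length
    let k := invList τ
    let xs := List.insertionSort (· ≤ ·) τ
    let d := xs.getD (m - k) 0 :: xs.eraseIdx (m - k)
    (IsHook d ∧ d.Perm τ ∧ invList d = m - k) ∧
    ∀ σ : List ℕ, IsHook σ → σ.Perm τ → invList σ = m - k → σ = d := by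
  intro m k xs d
  have hxs : xs.Pairwise (· < ·) := List.pairwise_lt_insertionSort_of_nodup hτ.1
  have hk0 : 0 < k := hτ.invList_pos
  have hkm : k < m := hτ.invList_lt_length
  have hj : m - k < xs.length := by
    rw [List.length_insertionSort]
    omega
  refine ⟨⟨isHook_moveToFront hxs (by omega) hj,
    (moveToFront_perm hj).trans (List.perm_insertionSort _ τ), invList_moveToFront hxs hj⟩, ?_⟩
  intro σ hσ hστ hσk
  rw [hσ.eq_moveToFront, List.insertionSort_eq_of_perm hστ, hσk]
  rfl
end

section
/- Let A_{0}, A_{1}, ..., A_r be the contents of the factors in the hook factorization π = p·τ_1⋯τ_r of a permutation π ∈ S_n. Then inv(π) − lec(π) equals the number of pairs (k,l) with k ∈ A_i, l ∈ A_j, k > l, and i < j. -/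
/-- The number of "cross inversions" of a sequence of blocks: pairs `(k, l)` with
`k` in an earlier block, `l` in a later block, and `k > l`. -/
def crossInv : List (List ℕ) → ℕ
  | [] => 0
  | b :: bs => (b.map (fun x => bs.flatten.countP (fun y => decide (y < x)))).sum + crossInv bs

/-! Every inversion of a concatenation of blocks lies either inside one block or between two
blocks, so `inv` of the word is the sum of `inv` of the blocks plus `crossInv`; the increasing
block `p` contributes no inversions of its own. -/

lemma invList_append (a b : List ℕ) :
    invList (a ++ b) =
      invList a + (a.map (fun x => b.countP (fun y => decide (y < x)))).sum + invList b := by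
  induction a with
  | nil => simp [invList]
  | cons x a ih =>
    simp only [List.cons_append, invList, List.countP_append, List.map_cons, List.sum_cons, ih]
    omega

lemma invList_flatten (bs : List (List ℕ)) :
    invList bs.flatten = (bs.map invList).sum + crossInv bs := by
  induction bs with
  | nil => rfl
  | cons b bs ih =>
    simp only [List.flatten_cons, invList_append, ih, crossInv, List.map_cons, List.sum_cons]
    omega

lemma invList_eq_zero_of_pairwise_le {w : List ℕ} (h : w.Pairwise (· ≤ ·)) : invList w = 0 := by
  induction h with
  | nil => rfl
  | @cons x xs hx _ ih =>
    rw [invList, ih, add_zero, List.countP_eq_zero]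
    simpa using hx

lemma IsIncr.invList_eq_zero {w : List ℕ} (h : IsIncr w) : invList w = 0 :=
  invList_eq_zero_of_pairwise_le ((List.isChain_iff_pairwise.mp h).imp le_of_lt)

theorem inv_sub_lec_eq_crossInv_general (p : List ℕ) (τs : List (List ℕ))
    (hp : IsIncr p) :
    invList (p ++ τs.flatten) = (τs.map invList).sum + crossInv (p :: τs) := by
  rw [← List.flatten_cons, invList_flatten, List.map_cons, List.sum_cons, hp.invList_eq_zero,
    zero_add]

/-- If `π = p·τ₁⋯τ_r` is the hook factorization of a permutation of `{1,…,n}`,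
then `inv(π) − lec(π)` equals the number of pairs `(k,l)` with `k ∈ A_i`,
`l ∈ A_j`, `k > l` and `i < j`, where `A₀,…,A_r` are the contents of the
factors (stated additively: `inv(π) = lec(π) + crossInv`). -/
theorem inv_sub_lec_eq_crossInv (n : ℕ) (p : List ℕ) (τs : List (List ℕ))
    (hp : IsIncr p) (hτ : ∀ τ ∈ τs, IsHook τ)
    (hperm : (p ++ τs.flatten).Perm (List.range' 1 n)) :
    invList (p ++ τs.flatten) = (τs.map invList).sum + crossInv (p :: τs) :=
  inv_sub_lec_eq_crossInv_general p τs hp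
end

section
/- Define polynomials A_n^{(r)}(t,q) by (e(z;q^r) − e(t^r z; q^r))/(e(t^r z; q^r) − t·e(z;q^r)) = ∑_{n≥1} A_n^{(r)}(t,q) z^n/(q^r;q^r)_n. Then A_n^{(r)}(1,1) = r^n · n! for all n ≥ 1 and r ≥ 1. -/
open Polynomial PowerSeries

/-- The q-shifted factorial `(q^r;q^r)_n = ∏_{i=1}^n (1 - q^{ri})`. -/
noncomputable def qrfac (r n : ℕ) : RatFunc ℚ :=
  ∏ i ∈ Finset.range n, (1 - (qq ^ r) ^ (i + 1))

/-- `e(z;q^r) = ∑ z^n/(q^r;q^r)_n`, a power series in `z` over `ℚ(q)[t]`. -/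
noncomputable def qexpZr (r : ℕ) : PowerSeries (Polynomial (RatFunc ℚ)) :=
  PowerSeries.mk fun n => Polynomial.C (qrfac r n)⁻¹

/-- `e(t^r z;q^r) = ∑ t^{rn} z^n/(q^r;q^r)_n`. -/
noncomputable def qexpTZr (r : ℕ) : PowerSeries (Polynomial (RatFunc ℚ)) :=
  PowerSeries.mk fun n => Polynomial.X ^ (r * n) * Polynomial.C (qrfac r n)⁻¹

/-! Adding `1` to the series `∑ A_n z^n/(q^r;q^r)_n` turns the right-hand side
`e(z) − e(t^r z)` into `(1 − t) e(z)`. So for `B_0 = A_0 + 1` and `B_j = A_j` (`j ≥ 1`) the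
coefficient of `z^n` reads
`∑_{i+j=n} (t^{ri} − t) B_j / ((q^r;q^r)_i (q^r;q^r)_j) = (1 − t) / (q^r;q^r)_n`.
Every term vanishes at `t = 1`; differentiating in `t` there gives the unitriangular system
`∑_{i+j=n} (1 − ri) [n choose i]_{q^r} B_j(1) = 1`. Its coefficients are polynomials in `q`, hence
so is its solution, and at `q = 1` it becomes `∑_{i+j=n} (1 − ri) C(n,i) b_j = 1`, which is solved
by `b_j = r^j j!`. -/

open Finset

/-- The q-Pochhammer symbol `(x;x)_n`. -/
def qPochhammer {R : Type*} [CommRing R] (x : R) (n : ℕ) : R :=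
  ∏ i ∈ range n, (1 - x ^ (i + 1))

section qPochhammer

variable {R : Type*} [CommRing R]

@[simp]
theorem qPochhammer_zero (x : R) : qPochhammer x 0 = 1 := by
  simp [qPochhammer]

theorem qPochhammer_succ (x : R) (n : ℕ) :
    qPochhammer x (n + 1) = qPochhammer x n * (1 - x ^ (n + 1)) :=
  prod_range_succ _ n

theorem qPochhammer_ne_zero [IsDomain R] {x : R} (hx : ¬IsOfFinOrder x) (n : ℕ) :
    qPochhammer x n ≠ 0 :=
  prod_ne_zero_iff.2 fun i _ h =>
    hx (isOfFinOrder_iff_pow_eq_one.2 ⟨i + 1, i.succ_pos, (sub_eq_zero.1 h).symm⟩)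

end qPochhammer

/-- The Gaussian binomial coefficient `[n choose k]_x`. -/
def qBinomial {R : Type*} [CommSemiring R] (x : R) : ℕ → ℕ → R
  | _, 0 => 1
  | 0, _ + 1 => 0
  | n + 1, k + 1 => qBinomial x n k + x ^ (k + 1) * qBinomial x n (k + 1)

section qBinomial

variable {R : Type*} [CommSemiring R]

@[simp]
theorem qBinomial_zero_right (x : R) (n : ℕ) : qBinomial x n 0 = 1 := by
  cases n <;> rfl

theorem qBinomial_succ_succ (x : R) (n k : ℕ) :
    qBinomial x (n + 1) (k + 1) = qBinomial x n k + x ^ (k + 1) * qBinomial x n (k + 1) := rfl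

theorem qBinomial_eq_zero_of_lt (x : R) {n k : ℕ} (h : n < k) : qBinomial x n k = 0 := by
  induction n generalizing k with
  | zero => obtain ⟨k, rfl⟩ := Nat.exists_eq_add_one.2 h; rfl
  | succ n ih =>
    obtain ⟨k, rfl⟩ := Nat.exists_eq_add_one.2 (n.succ_pos.trans h)
    rw [qBinomial_succ_succ, ih (by omega), ih (by omega), mul_zero, add_zero]

@[simp]
theorem qBinomial_self (x : R) (n : ℕ) : qBinomial x n n = 1 := by
  induction n with
  | zero => rfl
  | succ n ih =>
    rw [qBinomial_succ_succ, ih, qBinomial_eq_zero_of_lt x n.lt_succ_self, mul_zero, add_zero]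

theorem map_qBinomial {S : Type*} [CommSemiring S] (f : R →+* S) (x : R) (n k : ℕ) :
    f (qBinomial x n k) = qBinomial (f x) n k := by
  induction n generalizing k with
  | zero => cases k <;> simp [qBinomial]
  | succ n ih => cases k <;> simp [qBinomial_succ_succ, ih]

theorem qBinomial_one (n k : ℕ) : qBinomial (1 : R) n k = n.choose k := by
  induction n generalizing k with
  | zero => cases k <;> simp [qBinomial]
  | succ n ih => cases k <;> simp [qBinomial_succ_succ, ih, Nat.choose_succ_succ]

end qBinomial

theorem qBinomial_mul_qPochhammer {R : Type*} [CommRing R] (x : R) (k m : ℕ) :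
    qBinomial x (k + m) k * qPochhammer x k * qPochhammer x m = qPochhammer x (k + m) := by
  induction k generalizing m with
  | zero => simp
  | succ k ihk =>
    induction m with
    | zero => simp
    | succ m ihm =>
      have hk := ihk (m + 1)
      rw [qPochhammer_succ x m] at hk
      rw [show k + 1 + m = k + (m + 1) by ring, qPochhammer_succ x k] at ihm
      rw [show k + 1 + (m + 1) = k + (m + 1) + 1 by ring, qBinomial_succ_succ,
        qPochhammer_succ x k, qPochhammer_succ x m, qPochhammer_succ x (k + (m + 1))]
      linear_combination (1 - x ^ (k + 1)) * hk + x ^ (k + 1) * (1 - x ^ (m + 1)) * ihm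

theorem qBinomial_add_eq_div {F : Type*} [Field F] {x : F} (hx : ¬IsOfFinOrder x) (k m : ℕ) :
    qBinomial x (k + m) k = qPochhammer x (k + m) / (qPochhammer x k * qPochhammer x m) := by
  rw [← qBinomial_mul_qPochhammer, mul_assoc, mul_div_cancel_right₀]
  exact mul_ne_zero (qPochhammer_ne_zero hx k) (qPochhammer_ne_zero hx m)

theorem Finset.Nat.snd_lt_of_mem_erase_antidiagonal {n : ℕ} {p : ℕ × ℕ}
    (hp : p ∈ (antidiagonal n).erase (0, n)) : p.2 < n := by
  obtain ⟨hne, hsum⟩ := mem_erase.1 hp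
  rw [HasAntidiagonal.mem_antidiagonal] at hsum
  have : p.1 ≠ 0 := fun h => hne (Prod.ext h (by simp [← hsum, h]))
  omega

section UnitriangularSystem

variable {K : Type*} [CommRing K] {w : ℕ → ℕ → K}

theorem sum_antidiagonal_eq_add_sum_erase (hw0 : ∀ n, w n 0 = 1) (x : ℕ → K) (n : ℕ) :
    ∑ p ∈ antidiagonal n, w n p.1 * x p.2 =
      x n + ∑ p ∈ (antidiagonal n).erase (0, n), w n p.1 * x p.2 := by
  rw [← add_sum_erase _ _ (HasAntidiagonal.mem_antidiagonal.2 (zero_add n) : (0, n) ∈ _), hw0,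
    one_mul]

theorem mem_of_sum_antidiagonal_mul_eq (S : Subring K) (hw0 : ∀ n, w n 0 = 1)
    (hw : ∀ n i, w n i ∈ S) {x y : ℕ → K} (hy : ∀ n, y n ∈ S)
    (hx : ∀ n, ∑ p ∈ antidiagonal n, w n p.1 * x p.2 = y n) (n : ℕ) : x n ∈ S := by
  induction n using Nat.strong_induction_on with
  | _ n ih =>
    have hxn := hx n
    rw [sum_antidiagonal_eq_add_sum_erase hw0] at hxn
    rw [eq_sub_of_add_eq hxn]
    exact S.sub_mem (hy n) (S.sum_mem fun p hp =>
      S.mul_mem (hw n p.1) (ih p.2 (Nat.snd_lt_of_mem_erase_antidiagonal hp)))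

theorem eq_of_sum_antidiagonal_mul_eq (hw0 : ∀ n, w n 0 = 1) {x z y : ℕ → K}
    (hx : ∀ n, ∑ p ∈ antidiagonal n, w n p.1 * x p.2 = y n)
    (hz : ∀ n, ∑ p ∈ antidiagonal n, w n p.1 * z p.2 = y n) : x = z := by
  funext n
  induction n using Nat.strong_induction_on with
  | _ n ih =>
    have hxz := (hx n).trans (hz n).symm
    rw [sum_antidiagonal_eq_add_sum_erase hw0, sum_antidiagonal_eq_add_sum_erase hw0,
      sum_congr rfl fun p hp => by rw [ih p.2 (Nat.snd_lt_of_mem_erase_antidiagonal hp)]] at hxz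
    exact add_right_cancel hxz

theorem exists_lift_of_sum_antidiagonal_mul_eq {P L : Type*} [CommRing P] [CommRing L]
    (φ : P →+* K) (hφ : Function.Injective φ) (ψ : P →+* L) {w : ℕ → ℕ → P}
    (hw0 : ∀ n, w n 0 = 1) {y : ℕ → P} {x : ℕ → K} {z : ℕ → L}
    (hx : ∀ n, ∑ p ∈ antidiagonal n, φ (w n p.1) * x p.2 = φ (y n))
    (hz : ∀ n, ∑ p ∈ antidiagonal n, ψ (w n p.1) * z p.2 = ψ (y n)) (n : ℕ) :
    ∃ b : P, φ b = x n ∧ ψ b = z n := by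
  choose b hb using mem_of_sum_antidiagonal_mul_eq φ.range (fun n => by rw [hw0, map_one])
    (fun n i => ⟨w n i, rfl⟩) (fun n => ⟨y n, rfl⟩) hx
  have hb_sys (n : ℕ) : ∑ p ∈ antidiagonal n, w n p.1 * b p.2 = y n :=
    hφ (by simp only [map_sum, map_mul, hb, hx])
  have hψb : ψ ∘ b = z := eq_of_sum_antidiagonal_mul_eq (w := fun n i => ψ (w n i))
    (fun n => by rw [hw0, map_one])
    (fun n => by simpa only [map_sum, map_mul, Function.comp_apply] using congrArg ψ (hb_sys n)) hz
  exact ⟨b n, hb n, congrFun hψb n⟩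

end UnitriangularSystem

theorem sum_antidiagonal_one_sub_mul_choose_mul_pow_mul_factorial {R : Type*} [CommRing R]
    (r : R) (n : ℕ) :
    ∑ p ∈ antidiagonal n, (1 - r * p.1) * n.choose p.1 * (r ^ p.2 * p.2.factorial) = 1 := by
  induction n with
  | zero => simp
  | succ n ih =>
    have hshift : ∀ p ∈ antidiagonal n,
        (1 - r * p.1) * (n + 1).choose p.1 * (r ^ (p.2 + 1) * (p.2 + 1).factorial) =
          (n + 1) * r * ((1 - r * p.1) * n.choose p.1 * (r ^ p.2 * p.2.factorial)) := by
      rintro ⟨i, j⟩ h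
      rw [HasAntidiagonal.mem_antidiagonal] at h
      have hc := Nat.choose_mul_succ_eq n i
      rw [show n + 1 - i = j + 1 by omega] at hc
      have hc' : ((n + 1).choose i : R) * (j + 1) = n.choose i * (n + 1) := by
        simpa using congrArg (Nat.cast : ℕ → R) hc.symm
      simp only [Nat.factorial_succ, Nat.cast_mul, Nat.cast_succ, pow_succ]
      linear_combination (1 - r * i) * r ^ j * r * j.factorial * hc'
    rw [Nat.sum_antidiagonal_succ', sum_congr rfl hshift, ← mul_sum, ih]
    simp only [Nat.cast_add, Nat.cast_one, Nat.choose_self, mul_one, pow_zero, Nat.factorial_zero]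
    ring

theorem eval_one_derivative_X_pow_sub_X_mul {R : Type*} [CommRing R] (m : ℕ) (p : R[X]) :
    (derivative ((Polynomial.X ^ m - Polynomial.X) * p)).eval 1 = ((m : R) - 1) * p.eval 1 := by
  simp [derivative_mul, derivative_X_pow]

theorem not_isOfFinOrder_qq_pow {r : ℕ} (hr : 0 < r) : ¬IsOfFinOrder (qq ^ r) := by
  rw [isOfFinOrder_iff_pow_eq_one]
  rintro ⟨m, hm, h⟩
  rw [qq, ← RatFunc.algebraMap_X, ← map_pow, ← map_pow, ← map_one (algebraMap ℚ[X] _),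
    (IsFractionRing.injective ℚ[X] (RatFunc ℚ)).eq_iff, ← pow_mul] at h
  have := congrArg natDegree h
  simp only [natDegree_X_pow, natDegree_one, mul_eq_zero] at this
  omega

theorem qrfac_eq_qPochhammer (r n : ℕ) : qrfac r n = qPochhammer (qq ^ r) n := rfl

theorem coeff_qexpTZr_sub_C_X_mul_qexpZr (r n : ℕ) :
    PowerSeries.coeff n (qexpTZr r - PowerSeries.C Polynomial.X * qexpZr r) =
      (Polynomial.X ^ (r * n) - Polynomial.X) * Polynomial.C (qrfac r n)⁻¹ := by
  simp [qexpTZr, qexpZr, sub_mul]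

-- `X ^ 0` rather than `1`, to fit `eval_one_derivative_X_pow_sub_X_mul`.
theorem coeff_qexpZr_sub_C_X_mul_qexpZr (r n : ℕ) :
    PowerSeries.coeff n (qexpZr r - PowerSeries.C Polynomial.X * qexpZr r) =
      (Polynomial.X ^ 0 - Polynomial.X) * Polynomial.C (qrfac r n)⁻¹ := by
  simp [qexpZr, sub_mul]

theorem mul_mk_add_single_eq {r : ℕ} {A : ℕ → (RatFunc ℚ)[X]}
    (hA : (qexpTZr r - PowerSeries.C Polynomial.X * qexpZr r) *
        PowerSeries.mk (fun n => A n * Polynomial.C (qrfac r n)⁻¹) = qexpZr r - qexpTZr r) :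
    (qexpTZr r - PowerSeries.C Polynomial.X * qexpZr r) *
        PowerSeries.mk (fun n =>
          (A + Pi.single 0 1 : ℕ → (RatFunc ℚ)[X]) n * Polynomial.C (qrfac r n)⁻¹) =
      qexpZr r - PowerSeries.C Polynomial.X * qexpZr r := by
  have hsingle : PowerSeries.mk (fun n =>
          (A + Pi.single 0 1 : ℕ → (RatFunc ℚ)[X]) n * Polynomial.C (qrfac r n)⁻¹) =
      PowerSeries.mk (fun n => A n * Polynomial.C (qrfac r n)⁻¹) + 1 := by
    ext (_ | k) <;> simp [PowerSeries.coeff_one, qrfac, add_mul]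
  rw [hsingle, mul_add, hA, mul_one]
  ring

theorem sum_antidiagonal_qBinomial_mul_eval_one {r : ℕ} (hr : 0 < r) {B : ℕ → (RatFunc ℚ)[X]}
    (hB : (qexpTZr r - PowerSeries.C Polynomial.X * qexpZr r) *
        PowerSeries.mk (fun n => B n * Polynomial.C (qrfac r n)⁻¹) =
      qexpZr r - PowerSeries.C Polynomial.X * qexpZr r) (n : ℕ) :
    ∑ p ∈ antidiagonal n, (1 - (r : RatFunc ℚ) * p.1) * qBinomial (qq ^ r) n p.1 *
      (B p.2).eval 1 = 1 := by
  have hD := congrArg (fun F => (derivative (PowerSeries.coeff n F)).eval 1) hB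
  simp only [PowerSeries.coeff_mul, coeff_qexpTZr_sub_C_X_mul_qexpZr, coeff_mk,
    coeff_qexpZr_sub_C_X_mul_qexpZr, mul_assoc, eval_one_derivative_X_pow_sub_X_mul, map_sum,
    eval_finsetSum, eval_mul, eval_C, Nat.cast_mul, Nat.cast_zero] at hD
  have hq := not_isOfFinOrder_qq_pow hr
  calc _ = -qrfac r n * ∑ p ∈ antidiagonal n,
        ((r : RatFunc ℚ) * p.1 - 1) * ((qrfac r p.1)⁻¹ * (eval 1 (B p.2) * (qrfac r p.2)⁻¹)) := by
        rw [mul_sum]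
        refine sum_congr rfl fun p hp => ?_
        rw [← HasAntidiagonal.mem_antidiagonal.1 hp, qBinomial_add_eq_div hq, qrfac_eq_qPochhammer,
          qrfac_eq_qPochhammer, qrfac_eq_qPochhammer]
        ring
    _ = 1 := by
        rw [hD, qrfac_eq_qPochhammer]
        field_simp [qPochhammer_ne_zero hq n]
        ring

/-- If the `A n = A_n^{(r)}(t,q)` satisfy the defining generating function
`(e(z;q^r) − e(t^r z;q^r))/(e(t^r z;q^r) − t e(z;q^r)) = ∑_{n≥1} A_n^{(r)}(t,q) z^n/(q^r;q^r)_n`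
(cross-multiplied form), then `A_n^{(r)}(1,1) = r^n n!` for `n, r ≥ 1`,
evaluating first at `t = 1` and then at `q = 1`. -/
theorem colored_qEulerian_card (r : ℕ) (hr : 1 ≤ r) (A : ℕ → Polynomial (RatFunc ℚ))
    (hA : (qexpTZr r - PowerSeries.C (Polynomial.X : Polynomial (RatFunc ℚ)) * qexpZr r) *
        PowerSeries.mk (fun n => A n * Polynomial.C (qrfac r n)⁻¹) =
      qexpZr r - qexpTZr r) :
    ∀ n : ℕ, 1 ≤ n →
      RatFunc.eval (RingHom.id ℚ) 1 (Polynomial.eval (1 : RatFunc ℚ) (A n)) =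
        (r : ℚ) ^ n * n.factorial := by
  intro n hn
  set B : ℕ → (RatFunc ℚ)[X] := A + Pi.single 0 1
  obtain ⟨b, hb, hb1⟩ := exists_lift_of_sum_antidiagonal_mul_eq
    (algebraMap ℚ[X] (RatFunc ℚ)) (IsFractionRing.injective _ _) (evalRingHom 1)
    (w := fun n i => (1 - (r : ℚ[X]) * (i : ℚ[X])) * qBinomial (Polynomial.X ^ r) n i) (y := 1)
    (x := fun n => (B n).eval 1) (z := fun n => (r : ℚ) ^ n * n.factorial)
    (fun n => by simp)
    (fun n => by simpa [B, map_qBinomial, qq]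
      using sum_antidiagonal_qBinomial_mul_eval_one hr (mul_mk_add_single_eq hA) n)
    (fun n => by simpa only [map_sub, map_mul, map_one, map_natCast, map_qBinomial, map_pow,
        coe_evalRingHom, eval_X, one_pow, qBinomial_one, Pi.one_apply]
      using sum_antidiagonal_one_sub_mul_choose_mul_pow_mul_factorial (r : ℚ) n) n
  have hAn : (A n).eval 1 = (B n).eval 1 := by
    simp [B, Nat.one_le_iff_ne_zero.1 hn]
  rw [hAn, ← hb, RatFunc.eval_algebraMap]
  simpa using hb1
end

section
/- Write A_n^{(r)}(t,q) = ∑_i A^{(r)}_{n,i}(q) t^i. For positive integers i and n with i ≠ rn: ∑_k [n choose k]_{q^r} · A^{(r)}_{k, rn−i−1}(q) = ∑_k [n choose k]_{q^r} · A^{(r)}_{k, i−1}(q). -/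
open Polynomial PowerSeries

/-- The q-binomial coefficient `[n choose k]_{q^r}`. -/
noncomputable def qbinomr (r n k : ℕ) : RatFunc ℚ :=
  if k ≤ n then qrfac r n / (qrfac r (n - k) * qrfac r k) else 0

namespace Polynomial

variable {R : Type*}

theorem reflect_sum [Semiring R] {ι : Type*} (N : ℕ) (s : Finset ι) (f : ι → R[X]) :
    reflect N (∑ i ∈ s, f i) = ∑ i ∈ s, reflect N (f i) := by
  ext j
  simp only [coeff_reflect, finsetSum_coeff]

theorem reflect_X_pow_sub_X [Ring R] (m : ℕ) :
    reflect (m + 1) (X ^ m - X : R[X]) = -(X ^ m - X) := by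
  nth_rw 2 [← pow_one (X : R[X])]
  rw [reflect_sub, reflect_monomial, reflect_monomial, revAt_le (by omega), revAt_le (by omega),
    Nat.add_sub_cancel_left, Nat.add_sub_cancel, neg_sub, pow_one]

theorem one_sub_X_ne_zero [Ring R] [Nontrivial R] : (1 - X : R[X]) ≠ 0 := by
  rw [← neg_sub, neg_ne_zero, ← C_1]
  exact X_sub_C_ne_zero 1

theorem natDegree_one_sub_X [Ring R] [Nontrivial R] : (1 - X : R[X]).natDegree = 1 := by
  rw [← neg_sub, natDegree_neg, ← C_1, natDegree_X_sub_C]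

/-- `reflect N` fixes every monomial of degree above `N`, hence the separate degree bound. -/
def IsPalindromic [Semiring R] (N : ℕ) (p : R[X]) : Prop :=
  p.natDegree ≤ N ∧ reflect N p = p

def IsAntipalindromic [Ring R] (N : ℕ) (p : R[X]) : Prop :=
  p.natDegree ≤ N ∧ reflect N p = -p

theorem isPalindromic_zero [Semiring R] (N : ℕ) : IsPalindromic N (0 : R[X]) :=
  ⟨by simp, reflect_zero⟩

theorem isAntipalindromic_zero [Ring R] (N : ℕ) : IsAntipalindromic N (0 : R[X]) :=
  ⟨by simp, by rw [reflect_zero, neg_zero]⟩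

theorem isAntipalindromic_one_sub_X_pow [Ring R] (N : ℕ) :
    IsAntipalindromic N (1 - X ^ N : R[X]) := by
  refine ⟨(natDegree_sub_le _ _).trans (max_le (by simp) (natDegree_X_pow_le N)), ?_⟩
  rw [reflect_sub, reflect_one, reflect_monomial, revAt_le le_rfl, Nat.sub_self, pow_zero, neg_sub]

namespace IsAntipalindromic

variable [Ring R] {N : ℕ} {p q : R[X]}

theorem sub (hp : IsAntipalindromic N p) (hq : IsAntipalindromic N q) :
    IsAntipalindromic N (p - q) :=
  ⟨(natDegree_sub_le _ _).trans (max_le hp.1 hq.1), by rw [reflect_sub, hp.2, hq.2, neg_sub_neg,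
    neg_sub]⟩

theorem C_mul (hp : IsAntipalindromic N p) (c : R) : IsAntipalindromic N (C c * p) :=
  ⟨(natDegree_C_mul_le c p).trans hp.1, by rw [reflect_C_mul, hp.2, mul_neg]⟩

theorem sum {ι : Type*} {s : Finset ι} {f : ι → R[X]} (h : ∀ i ∈ s, IsAntipalindromic N (f i)) :
    IsAntipalindromic N (∑ i ∈ s, f i) :=
  ⟨natDegree_sum_le_of_forall_le _ _ fun i hi => (h i hi).1, by
    rw [reflect_sum, ← Finset.sum_neg_distrib]
    exact Finset.sum_congr rfl fun i hi => (h i hi).2⟩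

theorem isPalindromic_of_one_sub_X_mul [IsDomain R] (h : IsAntipalindromic (N + 1) ((1 - X) * p)) :
    IsPalindromic N p := by
  have hp : p.natDegree ≤ N := by
    rcases eq_or_ne p 0 with rfl | hp0
    · simp
    · have := h.1
      rw [natDegree_mul one_sub_X_ne_zero hp0, natDegree_one_sub_X] at this
      omega
  have hX : (1 - X : R[X]) = X ^ 0 - X := by rw [pow_zero]
  have hrefl := h.2
  rw [add_comm N, reflect_mul _ _ natDegree_one_sub_X.le hp, hX, reflect_X_pow_sub_X, ← hX,
    neg_mul] at hrefl
  exact ⟨hp, mul_left_cancel₀ one_sub_X_ne_zero (neg_injective hrefl)⟩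

end IsAntipalindromic

namespace IsPalindromic

variable {N : ℕ}

theorem X_pow_sub_X_mul [CommRing R] {p : R[X]} (hp : IsPalindromic N p) (m : ℕ) :
    IsAntipalindromic (m + 1 + N) ((X ^ m - X) * p) := by
  have hm : (X ^ m - X : R[X]).natDegree ≤ m + 1 :=
    (natDegree_sub_le _ _).trans (max_le ((natDegree_X_pow_le m).trans m.le_succ)
      (natDegree_X_le.trans (by omega)))
  refine ⟨natDegree_mul_le.trans (add_le_add hm hp.1), ?_⟩
  rw [reflect_mul _ _ hm hp.1, reflect_X_pow_sub_X, hp.2, neg_mul]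

theorem reflect_X_pow_mul [Semiring R] {p : R[X]} (hp : IsPalindromic N p) (m : ℕ) :
    reflect (m + N) (X ^ m * p) = p := by
  rw [reflect_mul _ _ (natDegree_X_pow_le m) hp.1, reflect_monomial, revAt_le le_rfl,
    Nat.sub_self, pow_zero, one_mul, hp.2]

end IsPalindromic

theorem coeff_pred_eq_of_sub_X_mul_eq [Ring R] {S T : R[X]} {M : ℕ} (hS : S.natDegree ≤ M - 1)
    (hST : reflect (M - 1) S = T) (h : S - X * T = 1 - X ^ M) {i : ℕ} (hi : 0 < i) (hiM : i ≠ M) :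
    (if i < M then T.coeff (M - i - 1) else 0) = T.coeff (i - 1) := by
  have hcoeff : S.coeff i = T.coeff (i - 1) := by
    have := congrArg (coeff · i) h
    obtain ⟨j, rfl⟩ := Nat.exists_eq_add_of_lt hi
    simp only [coeff_sub, coeff_X_mul, coeff_one, coeff_X_pow] at this
    rw [if_neg (by omega), if_neg (by omega), sub_zero, sub_eq_zero] at this
    simpa using this
  split_ifs with hlt
  · rw [← hcoeff, ← hST, coeff_reflect, revAt_le (by omega), show M - 1 - (M - i - 1) = i by omega]
  · rw [← hcoeff, coeff_eq_zero_of_natDegree_lt (by omega)]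

end Polynomial

theorem one_sub_qq_pow_ne_zero {m : ℕ} (hm : 0 < m) : 1 - qq ^ m ≠ 0 := by
  have h : 1 - qq ^ m = -algebraMap ℚ[X] (RatFunc ℚ) (Polynomial.X ^ m - Polynomial.C 1) := by
    simp [qq, RatFunc.algebraMap_X]
  rw [h, neg_ne_zero, map_ne_zero_iff _ (IsFractionRing.injective ℚ[X] (RatFunc ℚ))]
  exact X_pow_sub_C_ne_zero hm 1

theorem qrfac_ne_zero {r : ℕ} (hr : 1 ≤ r) (n : ℕ) : qrfac r n ≠ 0 :=
  Finset.prod_ne_zero_iff.2 fun i _ => by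
    rw [← pow_mul]
    exact one_sub_qq_pow_ne_zero (Nat.mul_pos hr i.succ_pos)

theorem qrfac_zero (r : ℕ) : qrfac r 0 = 1 :=
  Finset.prod_range_zero _

theorem qbinomr_eq_mul_inv (r : ℕ) {n k : ℕ} (hk : k ≤ n) :
    qbinomr r n k = qrfac r n * (qrfac r (n - k))⁻¹ * (qrfac r k)⁻¹ := by
  rw [qbinomr, if_pos hk, div_eq_mul_inv, mul_inv, mul_assoc]

theorem qbinomr_self {r : ℕ} (hr : 1 ≤ r) (n : ℕ) : qbinomr r n n = 1 := by
  rw [qbinomr_eq_mul_inv r le_rfl, Nat.sub_self, qrfac_zero,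
    inv_one, mul_one, mul_inv_cancel₀ (qrfac_ne_zero hr n)]

/-- The coefficient of `z^n` in the generating-function identity, multiplied by `(q^r;q^r)_n`. -/
def ColoredRecurrence (r : ℕ) (A : ℕ → (RatFunc ℚ)[X]) : Prop :=
  ∀ n, ∑ k ∈ Finset.range (n + 1),
      Polynomial.C (qbinomr r n k) * ((Polynomial.X ^ (r * (n - k)) - Polynomial.X) * A k) =
    1 - Polynomial.X ^ (r * n)

theorem coloredRecurrence_of_mul_eq {r : ℕ} (hr : 1 ≤ r) {A : ℕ → (RatFunc ℚ)[X]}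
    (hA : (qexpTZr r - PowerSeries.C (R := Polynomial (RatFunc ℚ)) Polynomial.X * qexpZr r) *
        PowerSeries.mk (fun n => A n * Polynomial.C (qrfac r n)⁻¹) =
      qexpZr r - qexpTZr r) :
    ColoredRecurrence r A := by
  intro n
  have h := congrArg (Polynomial.C (qrfac r n) * PowerSeries.coeff n ·) hA
  simp only [PowerSeries.coeff_mul] at h
  rw [← Finset.Nat.sum_antidiagonal_swap, Finset.Nat.sum_antidiagonal_eq_sum_range_succ_mk] at h
  simp only [Finset.mul_sum, map_sub, qexpZr, qexpTZr,
    PowerSeries.coeff_mk, PowerSeries.coeff_C_mul, Prod.swap] at h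
  have hfac : Polynomial.C (qrfac r n) * Polynomial.C (qrfac r n)⁻¹ = 1 := by
    rw [← map_mul, mul_inv_cancel₀ (qrfac_ne_zero hr n), map_one]
  convert h using 1
  · refine Finset.sum_congr rfl fun k hk => ?_
    rw [qbinomr_eq_mul_inv r (Nat.lt_succ_iff.1 (Finset.mem_range.1 hk)), map_mul, map_mul]
    ring
  · linear_combination (Polynomial.X ^ (r * n) - 1) * hfac

theorem mul_sub_add_mul_sub_one {r n k : ℕ} (hr : 1 ≤ r) (hk : 0 < k) (hkn : k ≤ n) :
    r * (n - k) + (r * k - 1) = r * n - 1 := by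
  have h₁ : r * (n - k) + r * k = r * n := by rw [← mul_add, Nat.sub_add_cancel hkn]
  have h₂ : 0 < r * k := Nat.mul_pos hr hk
  omega

noncomputable def binomSum (r : ℕ) (A : ℕ → (RatFunc ℚ)[X]) (n : ℕ) : (RatFunc ℚ)[X] :=
  ∑ k ∈ Finset.range (n + 1), Polynomial.C (qbinomr r n k) * A k

noncomputable def shiftedBinomSum (r : ℕ) (A : ℕ → (RatFunc ℚ)[X]) (n : ℕ) : (RatFunc ℚ)[X] :=
  ∑ k ∈ Finset.range (n + 1), Polynomial.C (qbinomr r n k) * (Polynomial.X ^ (r * (n - k)) * A k)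

namespace ColoredRecurrence

variable {r : ℕ} {A : ℕ → (RatFunc ℚ)[X]}

theorem apply_zero (h : ColoredRecurrence r A) : A 0 = 0 := by
  have h0 := h 0
  simp only [zero_add, Finset.sum_range_one, Nat.sub_self, mul_zero, pow_zero, sub_self] at h0
  rw [qbinomr, if_pos le_rfl, Nat.sub_self, qrfac_zero, mul_one, div_one, map_one, one_mul] at h0
  exact (mul_eq_zero.1 h0).resolve_left one_sub_X_ne_zero

theorem isPalindromic (hr : 1 ≤ r) (h : ColoredRecurrence r A) (n : ℕ) :
    IsPalindromic (r * n - 1) (A n) := by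
  induction n using Nat.strong_induction_on with
  | _ n ih =>
  rcases n.eq_zero_or_pos with rfl | hn
  · rw [h.apply_zero]
    exact isPalindromic_zero _
  have hsplit := h n
  rw [Finset.sum_range_succ, qbinomr_self hr, Nat.sub_self, mul_zero, pow_zero, map_one,
    one_mul] at hsplit
  have hlower : IsAntipalindromic (r * n) (∑ k ∈ Finset.range n,
      Polynomial.C (qbinomr r n k) * ((Polynomial.X ^ (r * (n - k)) - Polynomial.X) * A k)) := by
    refine IsAntipalindromic.sum fun k hk => ?_
    rcases k.eq_zero_or_pos with rfl | hk0
    · rw [h.apply_zero, mul_zero, mul_zero]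
      exact isAntipalindromic_zero _
    have hkn := Finset.mem_range.1 hk
    have hdeg : r * (n - k) + 1 + (r * k - 1) = r * n := by
      rw [add_right_comm, mul_sub_add_mul_sub_one hr hk0 hkn.le]
      exact Nat.sub_add_cancel (Nat.mul_pos hr hn)
    rw [← hdeg]
    exact ((ih k hkn).X_pow_sub_X_mul _).C_mul _
  refine IsAntipalindromic.isPalindromic_of_one_sub_X_mul ?_
  rw [Nat.sub_add_cancel (Nat.mul_pos hr hn), eq_sub_of_add_eq' hsplit]
  exact (isAntipalindromic_one_sub_X_pow _).sub hlower

theorem shiftedBinomSum_sub_X_mul_binomSum (h : ColoredRecurrence r A) (n : ℕ) :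
    shiftedBinomSum r A n - Polynomial.X * binomSum r A n = 1 - Polynomial.X ^ (r * n) := by
  rw [← h n, shiftedBinomSum, binomSum, Finset.mul_sum, ← Finset.sum_sub_distrib]
  exact Finset.sum_congr rfl fun k _ => by ring

theorem natDegree_shiftedBinomSum_le_and_reflect (hr : 1 ≤ r) (h : ColoredRecurrence r A)
    (n : ℕ) : (shiftedBinomSum r A n).natDegree ≤ r * n - 1 ∧
      reflect (r * n - 1) (shiftedBinomSum r A n) = binomSum r A n := by
  have hterm : ∀ k ∈ Finset.range (n + 1),
      (Polynomial.C (qbinomr r n k) * (Polynomial.X ^ (r * (n - k)) * A k)).natDegree ≤ r * n - 1 ∧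
      reflect (r * n - 1) (Polynomial.C (qbinomr r n k) * (Polynomial.X ^ (r * (n - k)) * A k)) =
        Polynomial.C (qbinomr r n k) * A k := by
    intro k hk
    rcases k.eq_zero_or_pos with rfl | hk0
    · simp [h.apply_zero]
    rw [← mul_sub_add_mul_sub_one hr hk0 (Nat.lt_succ_iff.1 (Finset.mem_range.1 hk))]
    have hpal := h.isPalindromic hr k
    refine ⟨(natDegree_C_mul_le _ _).trans (natDegree_mul_le.trans
      (add_le_add (natDegree_X_pow_le _) hpal.1)), ?_⟩
    rw [reflect_C_mul, hpal.reflect_X_pow_mul]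
  exact ⟨natDegree_sum_le_of_forall_le _ _ fun k hk => (hterm k hk).1,
    (reflect_sum _ _ _).trans (Finset.sum_congr rfl fun k hk => (hterm k hk).2)⟩

end ColoredRecurrence

theorem colored_symmetrical_identity_general (r : ℕ) (hr : 1 ≤ r)
    (A : ℕ → Polynomial (RatFunc ℚ))
    (hA : (qexpTZr r - PowerSeries.C (R := Polynomial (RatFunc ℚ)) Polynomial.X * qexpZr r) *
        PowerSeries.mk (fun n => A n * Polynomial.C (qrfac r n)⁻¹) =
      qexpZr r - qexpTZr r)
    (n i : ℕ) (hi : 0 < i) (hirn : i ≠ r * n) :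
    (∑ k ∈ Finset.range (n + 1),
        if i < r * n then qbinomr r n k * (A k).coeff (r * n - i - 1) else 0) =
    ∑ k ∈ Finset.range (n + 1), qbinomr r n k * (A k).coeff (i - 1) := by
  have hrec := coloredRecurrence_of_mul_eq hr hA
  obtain ⟨hdeg, hrefl⟩ := hrec.natDegree_shiftedBinomSum_le_and_reflect hr n
  have key := coeff_pred_eq_of_sub_X_mul_eq hdeg hrefl
    (hrec.shiftedBinomSum_sub_X_mul_binomSum n) hi hirn
  simp only [binomSum, finsetSum_coeff, Polynomial.coeff_C_mul] at key
  rw [Finset.sum_ite_irrel, Finset.sum_const_zero, key]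

/-- With `A k = A_k^{(r)}(t,q)` defined by the generating function
(cross-multiplied form) and `A^{(r)}_{k,i}(q)` the coefficient of `t^i`
(zero for negative `i`): for positive integers `i, n` with `i ≠ rn`,
`∑_k [n choose k]_{q^r} A^{(r)}_{k,rn−i−1}(q) = ∑_k [n choose k]_{q^r} A^{(r)}_{k,i−1}(q)`.
(The q-binomial vanishes for `k > n`.) -/
theorem colored_symmetrical_identity (r : ℕ) (hr : 1 ≤ r)
    (A : ℕ → Polynomial (RatFunc ℚ))
    (hA : (qexpTZr r - PowerSeries.C (R := Polynomial (RatFunc ℚ)) Polynomial.X * qexpZr r) *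
        PowerSeries.mk (fun n => A n * Polynomial.C (qrfac r n)⁻¹) =
      qexpZr r - qexpTZr r)
    (n i : ℕ) (hn : 0 < n) (hi : 0 < i) (hirn : i ≠ r * n) :
    (∑ k ∈ Finset.range (n + 1),
        if i < r * n then qbinomr r n k * (A k).coeff (r * n - i - 1) else 0) =
    ∑ k ∈ Finset.range (n + 1), qbinomr r n k * (A k).coeff (i - 1) :=
  colored_symmetrical_identity_general r hr A hA n i hi hirn
end
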